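/- arXiv:2305.06990 — 11 statements merged into one kernel-verified Lean document; each statement's English description precedes it below -/
import Mathlib

section
/- The classical elastic-collision velocity map satisfies the parametric set-theoretical Yang–Baxter equation: for all positive real masses m₁, m₂, m₃ and all real velocities (v₁, v₂, v₃) ∈ ℝ³, one has R⁰₂₃ ∘ R⁰₁₃ ∘ R⁰₁₂ (v₁,v₂,v₃) = R⁰₁₂ ∘ R⁰₁₃ ∘ R⁰₂₃ (v₁,v₂,v₃), where R⁰ᵢⱼ denotes the action of the map R⁰ with parameters (mᵢ, mⱼ) on the i-th and j-th components of ℝ³. -/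
/-!
Each collision `R⁰ᵢⱼ` conserves momentum and fixes the uniform velocities `(c, c, c)`, so it is
determined by its action on the relative velocities `(v₁ - v₃, v₂ - v₃)`. There it is a reflection
of the plane that is self-adjoint for the kinetic energy `G`: trace `0`, determinant `-1`,
`aᵀ G = G a`. For a product `P = a b c` of three such reflections, `Pᵀ G = G (c b a)` gives
`tr P = tr (c b a)`, while tracelessness of `a`, `b`, `c` gives `tr P = -tr (c b a)` in dimension
two. Hence `tr P = 0`, `P` is again a reflection, and `a b c = P = P⁻¹ = c b a`.
-/

/-- The classical elastic-collision velocity map `R⁰_{m₁,m₂}`. -/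
noncomputable def R0 (m₁ m₂ : ℝ) (v₁ v₂ : ℝ) : ℝ × ℝ :=
  ((v₁ * (m₁ - m₂) + 2 * m₂ * v₂) / (m₁ + m₂),
   (v₂ * (m₂ - m₁) + 2 * m₁ * v₁) / (m₁ + m₂))

def act12 {X : Type*} (R : X → X → X × X) (p : X × X × X) : X × X × X :=
  ((R p.1 p.2.1).1, (R p.1 p.2.1).2, p.2.2)

def act13 {X : Type*} (R : X → X → X × X) (p : X × X × X) : X × X × X :=
  ((R p.1 p.2.2).1, p.2.1, (R p.1 p.2.2).2)

def act23 {X : Type*} (R : X → X → X × X) (p : X × X × X) : X × X × X :=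
  (p.1, (R p.2.1 p.2.2).1, (R p.2.1 p.2.2).2)

open Matrix

structure Matrix.IsOrthogonalReflection {R : Type*} [CommRing R]
    (G A : Matrix (Fin 2) (Fin 2) R) : Prop where
  trace_eq_zero : A.trace = 0
  det_eq_neg_one : A.det = -1
  transpose_mul_eq : Aᵀ * G = G * A

namespace Matrix

variable {R : Type*} [CommRing R]

theorem mul_self_eq_one_of_trace_eq_zero_of_det_eq_neg_one {A : Matrix (Fin 2) (Fin 2) R}
    (htr : A.trace = 0) (hdet : A.det = -1) : A * A = 1 := by
  rw [trace_fin_two] at htr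
  rw [det_fin_two] at hdet
  rw [eta_fin_two A, mul_fin_two, one_fin_two]
  refine congrArg of (vec2_eq (vec2_eq ?_ ?_) (vec2_eq ?_ ?_))
  · linear_combination A 0 0 * htr - hdet
  · linear_combination A 0 1 * htr
  · linear_combination A 1 0 * htr
  · linear_combination A 1 1 * htr - hdet

theorem trace_mul_mul_add_trace_mul_mul_rev {A B C : Matrix (Fin 2) (Fin 2) R}
    (hA : A.trace = 0) (hB : B.trace = 0) (hC : C.trace = 0) :
    (A * B * C).trace + (C * B * A).trace = 0 := by
  rw [trace_fin_two, add_eq_zero_iff_eq_neg'] at hA hB hC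
  simp only [trace_fin_two, mul_apply, Fin.sum_univ_two, hA, hB, hC]
  ring

theorem trace_eq_of_transpose_mul_eq {n : Type*} [Fintype n] [DecidableEq n]
    {G P Q : Matrix n n R} (hG : IsUnit G.det) (h : Pᵀ * G = G * Q) : Q.trace = P.trace := by
  rw [← trace_transpose P, ← mul_nonsing_inv_cancel_right G Pᵀ hG, ← trace_mul_comm,
    ← mul_assoc, mul_assoc, h, nonsing_inv_mul_cancel_left G Q hG]

theorem IsOrthogonalReflection.mul_self {G A : Matrix (Fin 2) (Fin 2) R}
    (hA : IsOrthogonalReflection G A) : A * A = 1 :=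
  mul_self_eq_one_of_trace_eq_zero_of_det_eq_neg_one hA.trace_eq_zero hA.det_eq_neg_one

theorem IsOrthogonalReflection.mul_mul_eq_mul_mul_rev {K : Type*} [Field K] [NeZero (2 : K)]
    {G A B C : Matrix (Fin 2) (Fin 2) K} (hG : IsUnit G.det) (hA : IsOrthogonalReflection G A)
    (hB : IsOrthogonalReflection G B) (hC : IsOrthogonalReflection G C) :
    A * B * C = C * B * A := by
  have hinv : A * B * C * (C * B * A) = 1 := by
    simp only [← mul_assoc, mul_assoc _ C C, hC.mul_self, mul_one, mul_assoc _ B B, hB.mul_self,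
      hA.mul_self]
  have hadj : (A * B * C)ᵀ * G = G * (C * B * A) := by
    simp only [transpose_mul, mul_assoc, hA.transpose_mul_eq, ← mul_assoc _ G,
      hB.transpose_mul_eq, hC.transpose_mul_eq]
  have htr : (A * B * C).trace = 0 := by
    have h := trace_mul_mul_add_trace_mul_mul_rev hA.trace_eq_zero hB.trace_eq_zero
      hC.trace_eq_zero
    rw [trace_eq_of_transpose_mul_eq hG hadj, ← two_mul] at h
    exact (mul_eq_zero.mp h).resolve_left two_ne_zero
  have hdet : (A * B * C).det = -1 := by
    rw [det_mul, det_mul, hA.det_eq_neg_one, hB.det_eq_neg_one, hC.det_eq_neg_one]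
    norm_num
  calc A * B * C = A * B * C * (A * B * C) * (C * B * A) := by
        rw [mul_assoc (A * B * C) (A * B * C), hinv, mul_one]
    _ = C * B * A := by
        rw [mul_self_eq_one_of_trace_eq_zero_of_det_eq_neg_one htr hdet, one_mul]

end Matrix

namespace ElasticCollision

def momentum (m₁ m₂ m₃ : ℝ) (v : ℝ × ℝ × ℝ) : ℝ := m₁ * v.1 + m₂ * v.2.1 + m₃ * v.2.2

def relativeVelocity (v : ℝ × ℝ × ℝ) : Fin 2 → ℝ := ![v.1 - v.2.2, v.2.1 - v.2.2]

theorem eq_of_relativeVelocity_eq_of_momentum_eq {m₁ m₂ m₃ : ℝ} (hm : m₁ + m₂ + m₃ ≠ 0)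
    {v w : ℝ × ℝ × ℝ} (hrel : relativeVelocity v = relativeVelocity w)
    (hp : momentum m₁ m₂ m₃ v = momentum m₁ m₂ m₃ w) : v = w := by
  obtain ⟨v₁, v₂, v₃⟩ := v
  obtain ⟨w₁, w₂, w₃⟩ := w
  have h₁ := congrFun hrel 0
  have h₂ := congrFun hrel 1
  simp only [relativeVelocity, momentum, cons_val_zero, cons_val_one] at h₁ h₂ hp
  have h₃ : v₃ = w₃ := mul_left_cancel₀ hm (by linear_combination hp - m₁ * h₁ - m₂ * h₂)
  simp only [Prod.mk.injEq]
  exact ⟨by linear_combination h₁ + h₃, by linear_combination h₂ + h₃, h₃⟩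

theorem R0_momentum {m₁ m₂ : ℝ} (hm : m₁ + m₂ ≠ 0) (v₁ v₂ : ℝ) :
    m₁ * (R0 m₁ m₂ v₁ v₂).1 + m₂ * (R0 m₁ m₂ v₁ v₂).2 = m₁ * v₁ + m₂ * v₂ := by
  simp only [R0]
  field_simp
  ring

variable {m₁ m₂ m₃ : ℝ}

theorem momentum_act12 (hm : m₁ + m₂ ≠ 0) (v : ℝ × ℝ × ℝ) :
    momentum m₁ m₂ m₃ (act12 (R0 m₁ m₂) v) = momentum m₁ m₂ m₃ v := by
  simp only [momentum, act12]
  linear_combination R0_momentum hm v.1 v.2.1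

theorem momentum_act13 (hm : m₁ + m₃ ≠ 0) (v : ℝ × ℝ × ℝ) :
    momentum m₁ m₂ m₃ (act13 (R0 m₁ m₃) v) = momentum m₁ m₂ m₃ v := by
  simp only [momentum, act13]
  linear_combination R0_momentum hm v.1 v.2.2

theorem momentum_act23 (hm : m₂ + m₃ ≠ 0) (v : ℝ × ℝ × ℝ) :
    momentum m₁ m₂ m₃ (act23 (R0 m₂ m₃) v) = momentum m₁ m₂ m₃ v := by
  simp only [momentum, act23]
  linear_combination R0_momentum hm v.2.1 v.2.2

noncomputable def collisionMatrix12 (m₁ m₂ : ℝ) : Matrix (Fin 2) (Fin 2) ℝ :=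
  !![(m₁ - m₂) / (m₁ + m₂), 2 * m₂ / (m₁ + m₂); 2 * m₁ / (m₁ + m₂), (m₂ - m₁) / (m₁ + m₂)]

noncomputable def collisionMatrix13 (m₁ m₃ : ℝ) : Matrix (Fin 2) (Fin 2) ℝ :=
  !![-1, 0; -(2 * m₁ / (m₁ + m₃)), 1]

noncomputable def collisionMatrix23 (m₂ m₃ : ℝ) : Matrix (Fin 2) (Fin 2) ℝ :=
  !![1, -(2 * m₂ / (m₂ + m₃)); 0, -1]

theorem relativeVelocity_act12 (hm : m₁ + m₂ ≠ 0) (v : ℝ × ℝ × ℝ) :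
    relativeVelocity (act12 (R0 m₁ m₂) v) = collisionMatrix12 m₁ m₂ *ᵥ relativeVelocity v := by
  simp only [relativeVelocity, act12, R0, collisionMatrix12, mulVec_fin_two, of_apply, cons_val',
    cons_val_zero, cons_val_one, cons_val_fin_one]
  refine vec2_eq ?_ ?_ <;> field_simp <;> ring

theorem relativeVelocity_act13 (hm : m₁ + m₃ ≠ 0) (v : ℝ × ℝ × ℝ) :
    relativeVelocity (act13 (R0 m₁ m₃) v) = collisionMatrix13 m₁ m₃ *ᵥ relativeVelocity v := by
  simp only [relativeVelocity, act13, R0, collisionMatrix13, mulVec_fin_two, of_apply, cons_val',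
    cons_val_zero, cons_val_one, cons_val_fin_one]
  refine vec2_eq ?_ ?_ <;> field_simp <;> ring

theorem relativeVelocity_act23 (hm : m₂ + m₃ ≠ 0) (v : ℝ × ℝ × ℝ) :
    relativeVelocity (act23 (R0 m₂ m₃) v) = collisionMatrix23 m₂ m₃ *ᵥ relativeVelocity v := by
  simp only [relativeVelocity, act23, R0, collisionMatrix23, mulVec_fin_two, of_apply, cons_val',
    cons_val_zero, cons_val_one, cons_val_fin_one]
  refine vec2_eq ?_ ?_ <;> field_simp <;> ring

/-- In the relative velocities `(x, y)`, the kinetic energy in the centre-of-mass frame is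
`(m₁ m₃ x² + m₂ m₃ y² + m₁ m₂ (x - y)²) / (2 (m₁ + m₂ + m₃))`. -/
def kineticEnergyGram (m₁ m₂ m₃ : ℝ) : Matrix (Fin 2) (Fin 2) ℝ :=
  !![m₁ * (m₂ + m₃), -(m₁ * m₂); -(m₁ * m₂), m₂ * (m₁ + m₃)]

theorem det_kineticEnergyGram :
    (kineticEnergyGram m₁ m₂ m₃).det = m₁ * m₂ * m₃ * (m₁ + m₂ + m₃) := by
  rw [kineticEnergyGram, det_fin_two_of]
  ring

theorem isOrthogonalReflection_collisionMatrix12 (hm : m₁ + m₂ ≠ 0) :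
    (kineticEnergyGram m₁ m₂ m₃).IsOrthogonalReflection (collisionMatrix12 m₁ m₂) where
  trace_eq_zero := by rw [collisionMatrix12, trace_fin_two_of]; field_simp; ring
  det_eq_neg_one := by rw [collisionMatrix12, det_fin_two_of]; field_simp; ring
  transpose_mul_eq := by
    ext i j
    fin_cases i <;> fin_cases j <;>
      simp only [collisionMatrix12, kineticEnergyGram, mul_apply, Fin.sum_univ_two,
        transpose_apply, of_apply, cons_val', cons_val_zero, cons_val_one, cons_val_fin_one,
        Fin.zero_eta, Fin.mk_one, Fin.isValue] <;>
      field_simp <;> ring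

theorem isOrthogonalReflection_collisionMatrix13 (hm : m₁ + m₃ ≠ 0) :
    (kineticEnergyGram m₁ m₂ m₃).IsOrthogonalReflection (collisionMatrix13 m₁ m₃) where
  trace_eq_zero := by rw [collisionMatrix13, trace_fin_two_of]; ring
  det_eq_neg_one := by rw [collisionMatrix13, det_fin_two_of]; ring
  transpose_mul_eq := by
    ext i j
    fin_cases i <;> fin_cases j <;>
      simp only [collisionMatrix13, kineticEnergyGram, mul_apply, Fin.sum_univ_two,
        transpose_apply, of_apply, cons_val', cons_val_zero, cons_val_one, cons_val_fin_one,
        Fin.zero_eta, Fin.mk_one, Fin.isValue] <;>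
      field_simp <;> ring

theorem isOrthogonalReflection_collisionMatrix23 (hm : m₂ + m₃ ≠ 0) :
    (kineticEnergyGram m₁ m₂ m₃).IsOrthogonalReflection (collisionMatrix23 m₂ m₃) where
  trace_eq_zero := by rw [collisionMatrix23, trace_fin_two_of]; ring
  det_eq_neg_one := by rw [collisionMatrix23, det_fin_two_of]; ring
  transpose_mul_eq := by
    ext i j
    fin_cases i <;> fin_cases j <;>
      simp only [collisionMatrix23, kineticEnergyGram, mul_apply, Fin.sum_univ_two,
        transpose_apply, of_apply, cons_val', cons_val_zero, cons_val_one, cons_val_fin_one,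
        Fin.zero_eta, Fin.mk_one, Fin.isValue] <;>
      field_simp <;> ring

end ElasticCollision

open ElasticCollision in
/-- The classical collision map satisfies the parametric set-theoretical
Yang–Baxter equation. -/
theorem classical_collision_yang_baxter
    (m₁ m₂ m₃ : ℝ) (hm₁ : 0 < m₁) (hm₂ : 0 < m₂) (hm₃ : 0 < m₃)
    (v : ℝ × ℝ × ℝ) :
    act23 (R0 m₂ m₃) (act13 (R0 m₁ m₃) (act12 (R0 m₁ m₂) v)) =
      act12 (R0 m₁ m₂) (act13 (R0 m₁ m₃) (act23 (R0 m₂ m₃) v)) := by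
  have h₁₂ : m₁ + m₂ ≠ 0 := by positivity
  have h₁₃ : m₁ + m₃ ≠ 0 := by positivity
  have h₂₃ : m₂ + m₃ ≠ 0 := by positivity
  have hG : IsUnit (kineticEnergyGram m₁ m₂ m₃).det := by
    rw [det_kineticEnergyGram, isUnit_iff_ne_zero]
    positivity
  apply eq_of_relativeVelocity_eq_of_momentum_eq (add_pos (add_pos hm₁ hm₂) hm₃).ne'
  · simp only [relativeVelocity_act12 h₁₂, relativeVelocity_act13 h₁₃,
      relativeVelocity_act23 h₂₃, mulVec_mulVec, ← mul_assoc]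
    rw [(isOrthogonalReflection_collisionMatrix23 h₂₃).mul_mul_eq_mul_mul_rev hG
      (isOrthogonalReflection_collisionMatrix13 h₁₃) (isOrthogonalReflection_collisionMatrix12 h₁₂)]
  · simp only [momentum_act12 h₁₂, momentum_act13 h₁₃, momentum_act23 h₂₃]
end

section
/- The discrete wave equation (β−α)(f₁₂ − f) + (β+α)(f₁ − f₂) = 0 is 3D consistent: let α, β, γ be real parameters with α ≠ β, α ≠ γ, β ≠ γ, and let f, f₁, f₂, f₃ ∈ ℝ be arbitrary. Define f₁₂ = f − ((β+α)/(β−α))(f₁ − f₂), f₁₃ = f − ((γ+α)/(γ−α))(f₁ − f₃), f₂₃ = f − ((γ+β)/(γ−β))(f₂ − f₃) (the unique solutions of the equation on the three faces of a cube adjacent to f, with parameters (α,β), (α,γ), (β,γ) respectively). Then the three values of f₁₂₃ obtained by solving the equation on the three remaining faces, namely f₁₂₃ = f₃ − ((β+α)/(β−α))(f₁₃ − f₂₃), f₁₂₃ = f₂ − ((γ+α)/(γ−α))(f₁₂ − f₂₃), and f₁₂₃ = f₁ − ((γ+β)/(γ−β))(f₁₂ − f₁₃), all coincide. -/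
/-!
Solving the face equations makes every vertex value linear in `f, f₁, f₂, f₃`, with
coefficients built from the three face coefficients `a = (β+α)/(β-α)`, `b = (γ+α)/(γ-α)`,
`c = (γ+β)/(γ-β)`. Comparing the three expressions for `f₁₂₃` coefficient by coefficient,
they coincide exactly when `a b - a c + b c = 1`, and this identity holds for any three
distinct parameters.
-/

theorem cube_consistent_of_mul_sub_mul_add_mul_eq_one {R : Type*} [CommRing R] {a b c : R}
    (habc : a * b - a * c + b * c = 1) {f f₁ f₂ f₃ f₁₂ f₁₃ f₂₃ : R}
    (h₁₂ : f₁₂ = f - a * (f₁ - f₂)) (h₁₃ : f₁₃ = f - b * (f₁ - f₃))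
    (h₂₃ : f₂₃ = f - c * (f₂ - f₃)) :
    f₃ - a * (f₁₃ - f₂₃) = f₂ - b * (f₁₂ - f₂₃) ∧
      f₂ - b * (f₁₂ - f₂₃) = f₁ - c * (f₁₂ - f₁₃) := by
  subst h₁₂ h₁₃ h₂₃
  constructor
  · linear_combination (f₂ - f₃) * habc
  · linear_combination (f₁ - f₂) * habc

theorem wave_coeff_relation {K : Type*} [Field K] {α β γ : K}
    (hαβ : α ≠ β) (hαγ : α ≠ γ) (hβγ : β ≠ γ) :
    (β + α) / (β - α) * ((γ + α) / (γ - α)) - (β + α) / (β - α) * ((γ + β) / (γ - β))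
      + (γ + α) / (γ - α) * ((γ + β) / (γ - β)) = 1 := by
  have hβα : β - α ≠ 0 := sub_ne_zero.mpr hαβ.symm
  have hγα : γ - α ≠ 0 := sub_ne_zero.mpr hαγ.symm
  have hγβ : γ - β ≠ 0 := sub_ne_zero.mpr hβγ.symm
  field_simp
  ring

/-- 3D consistency of the discrete wave equation
`(β−α)(f₁₂ − f) + (β+α)(f₁ − f₂) = 0`. -/
theorem discrete_wave_3D_consistent
    (α β γ : ℝ) (hαβ : α ≠ β) (hαγ : α ≠ γ) (hβγ : β ≠ γ)
    (f f₁ f₂ f₃ : ℝ)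
    (f₁₂ f₁₃ f₂₃ : ℝ)
    (h₁₂ : f₁₂ = f - ((β + α) / (β - α)) * (f₁ - f₂))
    (h₁₃ : f₁₃ = f - ((γ + α) / (γ - α)) * (f₁ - f₃))
    (h₂₃ : f₂₃ = f - ((γ + β) / (γ - β)) * (f₂ - f₃)) :
    f₃ - ((β + α) / (β - α)) * (f₁₃ - f₂₃) =
      f₂ - ((γ + α) / (γ - α)) * (f₁₂ - f₂₃) ∧
    f₂ - ((γ + α) / (γ - α)) * (f₁₂ - f₂₃) =
      f₁ - ((γ + β) / (γ - β)) * (f₁₂ - f₁₃) :=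
  cube_consistent_of_mul_sub_mul_add_mul_eq_one (wave_coeff_relation hαβ hαγ hβγ) h₁₂ h₁₃ h₂₃
end

section
/- The relativistic velocity-ratio collision map R_{m₁,m₂}(x,y) = ( y(m₁x+m₂y)/(m₂x+m₁y), x(m₁x+m₂y)/(m₂x+m₁y) ) satisfies the parametric set-theoretical Yang–Baxter equation: for all positive reals m₁, m₂, m₃ and all positive reals (x, y, z), one has R₂₃ ∘ R₁₃ ∘ R₁₂ (x,y,z) = R₁₂ ∘ R₁₃ ∘ R₂₃ (x,y,z), where Rᵢⱼ denotes the action of R with parameters (mᵢ, mⱼ) on the i-th and j-th components. (Note that R_{m₁,m₂} maps pairs of positive reals to pairs of positive reals, so all compositions are defined.) -/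
/-- The relativistic velocity-ratio collision map `R_{m₁,m₂}`. -/
noncomputable def Rrel (m₁ m₂ : ℝ) (x y : ℝ) : ℝ × ℝ :=
  (y * ((m₁ * x + m₂ * y) / (m₂ * x + m₁ * y)),
   x * ((m₁ * x + m₂ * y) / (m₂ * x + m₁ * y)))

/-!
`R_{m₁,m₂}(x, y) = (λ y, λ x)` swaps the pair and rescales it by a common factor `λ`, which is
unchanged when `(x, y)` is rescaled. Hence the left side of the Yang–Baxter equation is
`(α z, α β y, β x)` for two explicit factors `α`, `β`. Conjugating by the reversal
`(a, b, c) ↦ (c, b, a)` exchanges `R₁₂` and `R₂₃` and turns `R_{a,b}` into `R_{b,a}`, so the right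
side is the reversal of the left side for reversed masses and point. The equation thus reduces to
one rational identity, `α = β` after reversal of masses and point.
-/

section Reversal

variable {X : Type*}

def tripleRev (p : X × X × X) : X × X × X := (p.2.2, p.2.1, p.1)

lemma tripleRev_mk (a b c : X) : tripleRev (a, b, c) = (c, b, a) := rfl

@[simp]
lemma tripleRev_tripleRev (p : X × X × X) : tripleRev (tripleRev p) = p := rfl

def flipPair (R : X → X → X × X) (u v : X) : X × X := (R v u).swap

lemma act12_flipPair (R : X → X → X × X) (p : X × X × X) :
    act12 (flipPair R) p = tripleRev (act23 R (tripleRev p)) := rfl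

lemma act13_flipPair (R : X → X → X × X) (p : X × X × X) :
    act13 (flipPair R) p = tripleRev (act13 R (tripleRev p)) := rfl

lemma act23_flipPair (R : X → X → X × X) (p : X × X × X) :
    act23 (flipPair R) p = tripleRev (act12 R (tripleRev p)) := rfl

lemma act12_act13_act23_eq_tripleRev (R₁₂ R₁₃ R₂₃ : X → X → X × X) (p : X × X × X) :
    act12 R₁₂ (act13 R₁₃ (act23 R₂₃ p)) =
      tripleRev (act23 (flipPair R₁₂) (act13 (flipPair R₁₃)
        (act12 (flipPair R₂₃) (tripleRev p)))) := by
  simp only [act12_flipPair, act13_flipPair, act23_flipPair, tripleRev_tripleRev]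

end Reversal

noncomputable def collisionFactor (m₁ m₂ x y : ℝ) : ℝ := (m₁ * x + m₂ * y) / (m₂ * x + m₁ * y)

lemma Rrel_eq (m₁ m₂ x y : ℝ) :
    Rrel m₁ m₂ x y = (y * collisionFactor m₁ m₂ x y, x * collisionFactor m₁ m₂ x y) := rfl

lemma flipPair_Rrel (m₁ m₂ : ℝ) : flipPair (Rrel m₁ m₂) = Rrel m₂ m₁ := by
  ext u v <;> simp only [flipPair, Rrel, Prod.fst_swap, Prod.snd_swap] <;> ring_nf

lemma collisionFactor_pos {m₁ m₂ x y : ℝ} (hm₁ : 0 < m₁) (hm₂ : 0 < m₂) (hx : 0 < x)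
    (hy : 0 < y) :
    0 < collisionFactor m₁ m₂ x y := by
  unfold collisionFactor; positivity

lemma collisionFactor_mul_mul (m₁ m₂ x y : ℝ) {c : ℝ} (hc : c ≠ 0) :
    collisionFactor m₁ m₂ (x * c) (y * c) = collisionFactor m₁ m₂ x y := by
  unfold collisionFactor
  rw [show m₁ * (x * c) + m₂ * (y * c) = (m₁ * x + m₂ * y) * c by ring,
    show m₂ * (x * c) + m₁ * (y * c) = (m₂ * x + m₁ * y) * c by ring, mul_div_mul_right _ _ hc]

noncomputable def ybeFactorFst (m₁ m₂ m₃ x y z : ℝ) : ℝ :=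
  collisionFactor m₁ m₃ (y * collisionFactor m₁ m₂ x y) z

noncomputable def ybeFactorLst (m₁ m₂ m₃ x y z : ℝ) : ℝ :=
  collisionFactor m₁ m₂ x y * collisionFactor m₂ m₃ x (y * ybeFactorFst m₁ m₂ m₃ x y z)

lemma act23_act13_act12_Rrel {m₁ m₂ x y : ℝ} (m₃ z : ℝ) (hk : collisionFactor m₁ m₂ x y ≠ 0) :
    act23 (Rrel m₂ m₃) (act13 (Rrel m₁ m₃) (act12 (Rrel m₁ m₂) (x, y, z))) =
      (z * ybeFactorFst m₁ m₂ m₃ x y z,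
        y * (ybeFactorFst m₁ m₂ m₃ x y z * ybeFactorLst m₁ m₂ m₃ x y z),
        x * ybeFactorLst m₁ m₂ m₃ x y z) := by
  have hrescale : collisionFactor m₂ m₃ (x * collisionFactor m₁ m₂ x y)
      (y * collisionFactor m₁ m₂ x y * ybeFactorFst m₁ m₂ m₃ x y z) =
      collisionFactor m₂ m₃ x (y * ybeFactorFst m₁ m₂ m₃ x y z) := by
    rw [mul_right_comm y, collisionFactor_mul_mul _ _ _ _ hk]
  have hα : collisionFactor m₁ m₃ (y * collisionFactor m₁ m₂ x y) z =
      ybeFactorFst m₁ m₂ m₃ x y z := rfl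
  simp only [act12, act13, act23, Rrel_eq, hα, hrescale, ybeFactorLst]
  ext <;> simp only <;> ring

lemma ybeFactorFst_eq_ybeFactorLst {m₁ m₂ m₃ x y z : ℝ} (hm₁ : 0 < m₁) (hm₂ : 0 < m₂)
    (hm₃ : 0 < m₃) (hx : 0 < x) (hy : 0 < y) (hz : 0 < z) :
    ybeFactorFst m₁ m₂ m₃ x y z = ybeFactorLst m₃ m₂ m₁ z y x := by
  simp only [ybeFactorFst, ybeFactorLst, collisionFactor]
  field_simp
  ring

/-- The relativistic velocity-ratio collision map satisfies the parametric
set-theoretical Yang–Baxter equation on positive reals. -/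
theorem relativistic_velocity_ratio_yang_baxter
    (m₁ m₂ m₃ : ℝ) (hm₁ : 0 < m₁) (hm₂ : 0 < m₂) (hm₃ : 0 < m₃)
    (x y z : ℝ) (hx : 0 < x) (hy : 0 < y) (hz : 0 < z) :
    act23 (Rrel m₂ m₃) (act13 (Rrel m₁ m₃) (act12 (Rrel m₁ m₂) (x, y, z))) =
      act12 (Rrel m₁ m₂) (act13 (Rrel m₁ m₃) (act23 (Rrel m₂ m₃) (x, y, z))) := by
  rw [act12_act13_act23_eq_tripleRev, flipPair_Rrel, flipPair_Rrel, flipPair_Rrel,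
    tripleRev_mk x y z,
    act23_act13_act12_Rrel _ _ (collisionFactor_pos hm₁ hm₂ hx hy).ne',
    act23_act13_act12_Rrel _ _ (collisionFactor_pos hm₃ hm₂ hz hy).ne',
    ybeFactorFst_eq_ybeFactorLst hm₁ hm₂ hm₃ hx hy hz,
    ← ybeFactorFst_eq_ybeFactorLst hm₃ hm₂ hm₁ hz hy hx]
  simp only [tripleRev_mk, mul_comm]
end

section
/- The map R_{m₁,m₂} admits the Lax representation with Lax matrix L(x, α, ζ) = [[ζ, αx], [α/x, ζ]]: for all positive reals m₁, m₂, x, y, if (u, v) = R_{m₁,m₂}(x, y), i.e. u = y(m₁x+m₂y)/(m₂x+m₁y) and v = x(m₁x+m₂y)/(m₂x+m₁y), then for every ζ ∈ ℂ one has the 2×2 matrix identity L(u, m₁, ζ) · L(v, m₂, ζ) = L(y, m₂, ζ) · L(x, m₁, ζ). -/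
open Matrix

/-- The Lax matrix `L(x, α, ζ) = [[ζ, αx], [α/x, ζ]]`. -/
noncomputable def LaxL (x α : ℝ) (ζ : ℂ) : Matrix (Fin 2) (Fin 2) ℂ :=
  !![ζ, ((α * x : ℝ) : ℂ); ((α / x : ℝ) : ℂ), ζ]

/-- The map `R_{m₁,m₂}` admits the Lax representation with Lax matrix
`L(x, α, ζ)`. -/
theorem relativistic_velocity_ratio_lax
    (m₁ m₂ x y : ℝ) (hm₁ : 0 < m₁) (hm₂ : 0 < m₂) (hx : 0 < x) (hy : 0 < y)
    (u v : ℝ)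
    (hu : u = y * ((m₁ * x + m₂ * y) / (m₂ * x + m₁ * y)))
    (hv : v = x * ((m₁ * x + m₂ * y) / (m₂ * x + m₁ * y)))
    (ζ : ℂ) :
    LaxL u m₁ ζ * LaxL v m₂ ζ = LaxL y m₂ ζ * LaxL x m₁ ζ := by
  have hd : 0 < m₂ * x + m₁ * y := by positivity
  have hn : 0 < m₁ * x + m₂ * y := by positivity
  have hu' : 0 < u := by rw [hu]; positivity
  have hv' : 0 < v := by rw [hv]; positivity
  have hxne : x ≠ 0 := hx.ne'
  have hyne : y ≠ 0 := hy.ne'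
  have hune : u ≠ 0 := hu'.ne'
  have hvne : v ≠ 0 := hv'.ne'
  have hdne : m₂ * x + m₁ * y ≠ 0 := hd.ne'
  have hnne : m₁ * x + m₂ * y ≠ 0 := hn.ne'
  have r1 : m₁ * u * (m₂ / v) = m₂ * y * (m₁ / x) := by
    subst hu hv; field_simp
  have r2 : m₂ * v + m₁ * u = m₁ * x + m₂ * y := by
    subst hu hv; field_simp
  have r3 : m₁ / u + m₂ / v = m₂ / y + m₁ / x := by
    subst hu hv; field_simp
  have r4 : m₁ / u * (m₂ * v) = m₂ / y * (m₁ * x) := by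
    subst hu hv; field_simp
  have c1 : ((m₁ * u : ℝ) : ℂ) * ((m₂ / v : ℝ) : ℂ) =
      ((m₂ * y : ℝ) : ℂ) * ((m₁ / x : ℝ) : ℂ) := by exact_mod_cast congrArg Complex.ofReal r1
  have c2 : ((m₂ * v : ℝ) : ℂ) + ((m₁ * u : ℝ) : ℂ) =
      ((m₁ * x : ℝ) : ℂ) + ((m₂ * y : ℝ) : ℂ) := by exact_mod_cast congrArg Complex.ofReal r2
  have c3 : ((m₁ / u : ℝ) : ℂ) + ((m₂ / v : ℝ) : ℂ) =
      ((m₂ / y : ℝ) : ℂ) + ((m₁ / x : ℝ) : ℂ) := by exact_mod_cast congrArg Complex.ofReal r3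
  have c4 : ((m₁ / u : ℝ) : ℂ) * ((m₂ * v : ℝ) : ℂ) =
      ((m₂ / y : ℝ) : ℂ) * ((m₁ * x : ℝ) : ℂ) := by exact_mod_cast congrArg Complex.ofReal r4
  ext i j
  fin_cases i <;> fin_cases j <;>
    simp [LaxL, Matrix.mul_apply, Fin.sum_univ_two, -Complex.ofReal_mul, -Complex.ofReal_div]
  · linear_combination c1
  · linear_combination ζ * c2
  · linear_combination ζ * c3
  · linear_combination c4
end

section
/- The discrete potential modified KdV equation f₁(α f + β f₁₂) − f₂(β f + α f₁₂) = 0 is 3D consistent: let α, β, γ be nonzero real parameters and f, f₁, f₂, f₃ nonzero reals such that all denominators appearing below are nonzero. Define f₁₂ = f(α f₁ − β f₂)/(α f₂ − β f₁), f₁₃ = f(α f₁ − γ f₃)/(α f₃ − γ f₁), f₂₃ = f(β f₂ − γ f₃)/(β f₃ − γ f₂) (the unique solutions of the equation on the three faces of a cube adjacent to f, with parameter pairs (α,β), (α,γ), (β,γ) respectively). Then the three values of f₁₂₃ obtained by solving the equation on the three remaining faces, namely f₁₂₃ = f₃(α f₁₃ − β f₂₃)/(α f₂₃ − β f₁₃),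 f₁₂₃ = f₂(α f₁₂ − γ f₂₃)/(α f₂₃ − γ f₁₂), and f₁₂₃ = f₁(β f₁₂ − γ f₁₃)/(β f₁₃ − γ f₁₂), all coincide. -/
set_option maxHeartbeats 2000000


/-- 3D consistency of the discrete potential modified KdV equation
`f₁(α f + β f₁₂) − f₂(β f + α f₁₂) = 0`. -/
theorem mKdV_3D_consistent
    (α β γ : ℝ) (hα : α ≠ 0) (hβ : β ≠ 0) (hγ : γ ≠ 0)
    (f f₁ f₂ f₃ : ℝ) (hf : f ≠ 0) (hf₁ : f₁ ≠ 0) (hf₂ : f₂ ≠ 0) (hf₃ : f₃ ≠ 0)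
    (f₁₂ f₁₃ f₂₃ : ℝ)
    (hd₁₂ : α * f₂ - β * f₁ ≠ 0)
    (hd₁₃ : α * f₃ - γ * f₁ ≠ 0)
    (hd₂₃ : β * f₃ - γ * f₂ ≠ 0)
    (h₁₂ : f₁₂ = f * (α * f₁ - β * f₂) / (α * f₂ - β * f₁))
    (h₁₃ : f₁₃ = f * (α * f₁ - γ * f₃) / (α * f₃ - γ * f₁))
    (h₂₃ : f₂₃ = f * (β * f₂ - γ * f₃) / (β * f₃ - γ * f₂))
    (hD₁ : α * f₂₃ - β * f₁₃ ≠ 0)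
    (hD₂ : α * f₂₃ - γ * f₁₂ ≠ 0)
    (hD₃ : β * f₁₃ - γ * f₁₂ ≠ 0) :
    f₃ * (α * f₁₃ - β * f₂₃) / (α * f₂₃ - β * f₁₃) =
      f₂ * (α * f₁₂ - γ * f₂₃) / (α * f₂₃ - γ * f₁₂) ∧
    f₂ * (α * f₁₂ - γ * f₂₃) / (α * f₂₃ - γ * f₁₂) =
      f₁ * (β * f₁₂ - γ * f₁₃) / (β * f₁₃ - γ * f₁₂) := by
  subst h₁₂ h₁₃ h₂₃
  refine ⟨?_, ?_⟩
  · rw [div_eq_div_iff hD₁ hD₂]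
    have k1 : f₃ * α - f₁ * γ ≠ 0 := by intro h; apply hd₁₃; linarith
    have k2 : f₃ * β - γ * f₂ ≠ 0 := by intro h; apply hd₂₃; linarith
    have k3 : α * f₂ - f₁ * β ≠ 0 := by intro h; apply hd₁₂; linarith
    field_simp
    ring
  · rw [div_eq_div_iff hD₂ hD₃]
    have k1 : α * f₃ - f₁ * γ ≠ 0 := by intro h; apply hd₁₃; linarith
    have k2 : β * f₃ - f₂ * γ ≠ 0 := by intro h; apply hd₂₃; linarith
    have k3 : f₂ * α - f₁ * β ≠ 0 := by intro h; apply hd₁₂; linarith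
    field_simp
    ring
end

section
/- The collision solution of the relativistic head-on collision system satisfies the conservation laws: let x = (x₀, x₁) and y = (y₀, y₁) in ℝ² with ⟨x+y, x+y⟩ ≠ 0, and set k = (⟨x,x⟩ − ⟨y,y⟩)/⟨x+y, x+y⟩, u = y + k(x+y), v = x − k(x+y). Then u + v = x + y, ⟨u,u⟩ = ⟨x,x⟩, ⟨v,v⟩ = ⟨y,y⟩, and k(u,v) = k(x,y) (where k(a,b) = (⟨a,a⟩ − ⟨b,b⟩)/⟨a+b, a+b⟩). Moreover, if x and y are forward timelike (x₀ > 0 and ⟨x,x⟩ > 0, y₀ > 0 and ⟨y,y⟩ > 0), then u and v are forward timelike as well. -/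
/-- The two-dimensional Minkowski bilinear form on `ℝ²`. -/
def mink (a b : ℝ × ℝ) : ℝ := a.1 * b.1 - a.2 * b.2

/-- A vector of `ℝ²` is forward timelike if its 0-th component and its
Minkowski square are positive. -/
def ForwardTimelike (a : ℝ × ℝ) : Prop := 0 < a.1 ∧ 0 < mink a a

/-- The coefficient `k(x,y)` of the relativistic head-on collision map. -/
noncomputable def kcol (x y : ℝ × ℝ) : ℝ :=
  (mink x x - mink y y) / mink (x + y) (x + y)

lemma aux_pos (u1 u2 s1 s2 : ℝ) (hs1 : 0 < s1)
    (hss : 0 < s1 * s1 - s2 * s2)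
    (huu : 0 < u1 * u1 - u2 * u2)
    (hus : 0 < u1 * s1 - u2 * s2) : 0 < u1 := by
  by_contra hle
  push_neg at hle
  nlinarith [sq_nonneg (u1 * s2 - u2 * s1), mul_pos huu hss, mul_nonpos_of_nonpos_of_nonneg hle hs1.le]

lemma aux_facts (a b c d : ℝ) (ha : 0 < a) (hx : 0 < a * a - b * b)
    (hc : 0 < c) (hy : 0 < c * c - d * d) :
    0 < (a + c) * (a + c) - (b + d) * (b + d) ∧ 0 < a + c ∧
    0 < a * (a + c) - b * (b + d) ∧ 0 < c * (a + c) - d * (b + d) := by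
  have h1 : b * b < a * a := by linarith
  have h2 : d * d < c * c := by linarith
  have habcd : b * d < a * c := by
    rcases le_or_gt (b * d) 0 with hbd | hbd
    · exact hbd.trans_lt (mul_pos ha hc)
    · have h3 : (b * d) * (b * d) < (a * c) * (a * c) := by
        nlinarith [h1, h2, sq_nonneg b, sq_nonneg d]
      nlinarith [mul_pos ha hc, h3]
  refine ⟨by nlinarith [habcd], by linarith, by nlinarith [habcd], by nlinarith [habcd]⟩

/-- The collision solution of the relativistic head-on collision system
satisfies the conservation laws, and preserves forward timelike vectors. -/
theorem momentum_energy_map_invariants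
    (x y : ℝ × ℝ) (h : mink (x + y) (x + y) ≠ 0)
    (u v : ℝ × ℝ)
    (hu : u = y + kcol x y • (x + y))
    (hv : v = x - kcol x y • (x + y)) :
    u + v = x + y ∧
    mink u u = mink x x ∧
    mink v v = mink y y ∧
    kcol u v = kcol x y ∧
    (ForwardTimelike x → ForwardTimelike y →
      ForwardTimelike u ∧ ForwardTimelike v) := by
  obtain ⟨a, b⟩ := x
  obtain ⟨c, d⟩ := y
  obtain ⟨U1, U2⟩ := u
  obtain ⟨V1, V2⟩ := v
  simp only [mink, kcol, ForwardTimelike, Prod.mk_add_mk, Prod.smul_mk, smul_eq_mul,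
    Prod.mk_sub_mk, Prod.mk.injEq] at *
  obtain ⟨hu1, hu2⟩ := hu
  obtain ⟨hv1, hv2⟩ := hv
  subst hu1 hu2 hv1 hv2
  have huu : (c + ((a * a - b * b - (c * c - d * d)) / ((a + c) * (a + c) - (b + d) * (b + d))) * (a + c)) *
        (c + ((a * a - b * b - (c * c - d * d)) / ((a + c) * (a + c) - (b + d) * (b + d))) * (a + c)) -
      (d + ((a * a - b * b - (c * c - d * d)) / ((a + c) * (a + c) - (b + d) * (b + d))) * (b + d)) *
        (d + ((a * a - b * b - (c * c - d * d)) / ((a + c) * (a + c) - (b + d) * (b + d))) * (b + d)) =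
      a * a - b * b := by
    field_simp [show (a + c) ^ 2 - (b + d) ^ 2 ≠ 0 by simpa [sq] using h]
    ring
  have hvv : (a - ((a * a - b * b - (c * c - d * d)) / ((a + c) * (a + c) - (b + d) * (b + d))) * (a + c)) *
        (a - ((a * a - b * b - (c * c - d * d)) / ((a + c) * (a + c) - (b + d) * (b + d))) * (a + c)) -
      (b - ((a * a - b * b - (c * c - d * d)) / ((a + c) * (a + c) - (b + d) * (b + d))) * (b + d)) *
        (b - ((a * a - b * b - (c * c - d * d)) / ((a + c) * (a + c) - (b + d) * (b + d))) * (b + d)) =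
      c * c - d * d := by
    field_simp [show (a + c) ^ 2 - (b + d) ^ 2 ≠ 0 by simpa [sq] using h]
    ring
  refine ⟨⟨by ring, by ring⟩, huu, hvv, ?_, ?_⟩
  · rw [huu, hvv]
    congr 1
    field_simp [show (a + c) ^ 2 - (b + d) ^ 2 ≠ 0 by simpa [sq] using h]
    ring
  · rintro ⟨ha, hx⟩ ⟨hc, hy⟩
    obtain ⟨hD, hs1, hxs, hys⟩ := aux_facts a b c d ha hx hc hy
    have hus : (c + ((a * a - b * b - (c * c - d * d)) / ((a + c) * (a + c) - (b + d) * (b + d))) * (a + c)) * (a + c) -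
        (d + ((a * a - b * b - (c * c - d * d)) / ((a + c) * (a + c) - (b + d) * (b + d))) * (b + d)) * (b + d) =
        a * (a + c) - b * (b + d) := by
      field_simp [show (a + c) ^ 2 - (b + d) ^ 2 ≠ 0 by simpa [sq] using h]
      ring
    have hvs : (a - ((a * a - b * b - (c * c - d * d)) / ((a + c) * (a + c) - (b + d) * (b + d))) * (a + c)) * (a + c) -
        (b - ((a * a - b * b - (c * c - d * d)) / ((a + c) * (a + c) - (b + d) * (b + d))) * (b + d)) * (b + d) =
        c * (a + c) - d * (b + d) := by
      field_simp [show (a + c) ^ 2 - (b + d) ^ 2 ≠ 0 by simpa [sq] using h]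
      ring
    constructor
    · refine ⟨aux_pos _ _ _ _ hs1 hD (by rw [huu]; exact hx) (by rw [hus]; exact hxs), by rw [huu]; exact hx⟩
    · refine ⟨aux_pos _ _ _ _ hs1 hD (by rw [hvv]; exact hy) (by rw [hvs]; exact hys), by rw [hvv]; exact hy⟩
end

section
/- The momentum-energy map R is a set-theoretical Yang–Baxter map: for all forward timelike vectors x, y, z ∈ ℝ² (i.e. each has positive 0-th component and positive Minkowski square, which guarantees that all intermediate maps are defined and preserve forward timelike vectors), one has R₂₃ ∘ R₁₃ ∘ R₁₂ (x, y, z) = R₁₂ ∘ R₁₃ ∘ R₂₃ (x, y, z), where Rᵢⱼ denotes the action of R on the i-th and j-th factors of ℝ² × ℝ² × ℝ². -/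
/-- The momentum-energy map of an elastic relativistic head-on collision. -/
noncomputable def Rme (x y : ℝ × ℝ) : (ℝ × ℝ) × (ℝ × ℝ) :=
  (y + kcol x y • (x + y), x - kcol x y • (x + y))

set_option maxHeartbeats 1000000

noncomputable def P (a b : ℝ) : ℝ × ℝ := ((a+b)/2, (a-b)/2)

lemma P_inj {p q p' q' : ℝ} : P p q = P p' q' ↔ p = p' ∧ q = q' := by
  constructor
  · intro h
    rw [P, P, Prod.mk.injEq] at h
    obtain ⟨h1, h2⟩ := h
    constructor <;> linarith
  · rintro ⟨rfl, rfl⟩; rfl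

lemma smul_P (t p q : ℝ) : t • P p q = P (t*p) (t*q) := by
  simp only [P, Prod.smul_mk, smul_eq_mul, Prod.mk.injEq]
  constructor <;> ring

lemma kcol_smul (x y : ℝ × ℝ) (t : ℝ) (ht : t ≠ 0) :
    kcol (t • x) (t • y) = kcol x y := by
  have e1 : mink (t • x) (t • x) - mink (t • y) (t • y)
      = t^2 * (mink x x - mink y y) := by
    simp only [mink, Prod.smul_fst, Prod.smul_snd, smul_eq_mul]; ring
  have e2 : mink (t • x + t • y) (t • x + t • y) = t^2 * mink (x + y) (x + y) := by
    simp only [mink, Prod.smul_fst, Prod.smul_snd, Prod.fst_add, Prod.snd_add,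
      smul_eq_mul]
    ring
  rw [kcol, e1, e2, mul_div_mul_left _ _ (pow_ne_zero 2 ht), kcol]

lemma Rme_smul (x y : ℝ × ℝ) (t : ℝ) (ht : t ≠ 0) :
    Rme (t • x) (t • y) = (t • (Rme x y).1, t • (Rme x y).2) := by
  rw [Rme, Rme, kcol_smul x y t ht]
  simp only [Prod.mk.injEq]
  constructor <;> module

lemma Rme_lc (a b c d : ℝ) (hac : a + c ≠ 0) (hbd : b + d ≠ 0) :
    Rme (P a b) (P c d) = (P (b*(a+c)/(b+d)) (a*(b+d)/(a+c)),
                           P (d*(a+c)/(b+d)) (c*(b+d)/(a+c))) := by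
  have hS : mink (P a b + P c d) (P a b + P c d) = (a+c)*(b+d) := by
    simp only [mink, P, Prod.mk_add_mk]; ring
  have hk : kcol (P a b) (P c d) = (a*b - c*d)/((a+c)*(b+d)) := by
    rw [kcol, hS]
    congr 1
    simp only [mink, P]; ring
  rw [Rme, hk]
  simp only [P, Prod.mk_add_mk, Prod.smul_mk, smul_eq_mul, Prod.mk_sub_mk, Prod.mk.injEq]
  refine ⟨⟨?_, ?_⟩, ?_, ?_⟩ <;> field_simp <;> ring

lemma L13 (a b c d e f : ℝ) (ha : 0 < a) (hb : 0 < b) (hc : 0 < c) (hd : 0 < d)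
    (he : 0 < e) (hf : 0 < f) :
    Rme (P (b*(a+c)/(b+d)) (a*(b+d)/(a+c))) (P e f)
      = (P (a*(b*(a+c)+e*(b+d))/(a*(b+d)+f*(a+c))) (b*(a*(b+d)+f*(a+c))/(b*(a+c)+e*(b+d))), P (f*(a+c)*(b*(a+c)+e*(b+d))/((b+d)*(a*(b+d)+f*(a+c)))) (e*(b+d)*(a*(b+d)+f*(a+c))/((a+c)*(b*(a+c)+e*(b+d))))) := by
  have hac : (0:ℝ) < a + c := by positivity
  have hbd : (0:ℝ) < b + d := by positivity
  have hA : (0:ℝ) < (b*(a+c)+e*(b+d)) := by positivity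
  have hB : (0:ℝ) < (a*(b+d)+f*(a+c)) := by positivity
  have e1 : b*(a+c)/(b+d) + e = (b*(a+c)+e*(b+d))/(b+d) := by field_simp
  have e2 : a*(b+d)/(a+c) + f = (a*(b+d)+f*(a+c))/(a+c) := by field_simp
  rw [Rme_lc _ _ _ _ (by rw [e1]; positivity) (by rw [e2]; positivity), e1, e2,
    Prod.mk.injEq, P_inj, P_inj]
  refine ⟨⟨?_, ?_⟩, ?_, ?_⟩ <;> · field_simp

lemma L13r (a b c d e f : ℝ) (ha : 0 < a) (hb : 0 < b) (hc : 0 < c) (hd : 0 < d)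
    (he : 0 < e) (hf : 0 < f) :
    Rme (P a b) (P (f*(c+e)/(d+f)) (e*(d+f)/(c+e)))
      = (P (b*(c+e)*(a*(d+f)+f*(c+e))/((d+f)*(b*(c+e)+e*(d+f)))) (a*(d+f)*(b*(c+e)+e*(d+f))/((c+e)*(a*(d+f)+f*(c+e)))), P (e*(a*(d+f)+f*(c+e))/(b*(c+e)+e*(d+f))) (f*(b*(c+e)+e*(d+f))/(a*(d+f)+f*(c+e)))) := by
  have hce : (0:ℝ) < c + e := by positivity
  have hdf : (0:ℝ) < d + f := by positivity
  have hC : (0:ℝ) < (a*(d+f)+f*(c+e)) := by positivity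
  have hD : (0:ℝ) < (b*(c+e)+e*(d+f)) := by positivity
  have e5 : a + f*(c+e)/(d+f) = (a*(d+f)+f*(c+e))/(d+f) := by field_simp
  have e6 : b + e*(d+f)/(c+e) = (b*(c+e)+e*(d+f))/(c+e) := by field_simp
  rw [Rme_lc _ _ _ _ (by rw [e5]; positivity) (by rw [e6]; positivity), e5, e6,
    Prod.mk.injEq, P_inj, P_inj]
  refine ⟨⟨?_, ?_⟩, ?_, ?_⟩ <;> · field_simp

lemma L23 (a b c d e f : ℝ) (ha : 0 < a) (hb : 0 < b) (hc : 0 < c) (hd : 0 < d)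
    (he : 0 < e) (hf : 0 < f) :
    Rme (P (d*(a+c)/(b+d)) (c*(b+d)/(a+c))) (P (f*(a+c)*(b*(a+c)+e*(b+d))/((b+d)*(a*(b+d)+f*(a+c)))) (e*(b+d)*(a*(b+d)+f*(a+c))/((a+c)*(b*(a+c)+e*(b+d)))))
      = (P (c*(b*(a+c)+e*(b+d))*(a*(d+f)+f*(c+e))/((a*(b+d)+f*(a+c))*(b*(c+e)+e*(d+f)))) (d*(a*(b+d)+f*(a+c))*(b*(c+e)+e*(d+f))/((b*(a+c)+e*(b+d))*(a*(d+f)+f*(c+e)))), P (e*(a*(d+f)+f*(c+e))/(b*(c+e)+e*(d+f))) (f*(b*(c+e)+e*(d+f))/(a*(d+f)+f*(c+e)))) := by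
  have hac : (0:ℝ) < a + c := by positivity
  have hbd : (0:ℝ) < b + d := by positivity
  have hA : (0:ℝ) < (b*(a+c)+e*(b+d)) := by positivity
  have hB : (0:ℝ) < (a*(b+d)+f*(a+c)) := by positivity
  have hC : (0:ℝ) < (a*(d+f)+f*(c+e)) := by positivity
  have hD : (0:ℝ) < (b*(c+e)+e*(d+f)) := by positivity
  have ht : (0:ℝ) < ((a+c)*(b+d)*(b*(a+c)+e*(b+d))*(a*(b+d)+f*(a+c))) := by positivity
  have hv : P (d*(a+c)/(b+d)) (c*(b+d)/(a+c)) = (((a+c)*(b+d)*(b*(a+c)+e*(b+d))*(a*(b+d)+f*(a+c))))⁻¹ • P (d*(a+c)^2*(b*(a+c)+e*(b+d))*(a*(b+d)+f*(a+c))) (c*(b+d)^2*(b*(a+c)+e*(b+d))*(a*(b+d)+f*(a+c))) := by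
    rw [smul_P, P_inj]
    constructor <;>
      · rw [inv_mul_eq_div, div_eq_div_iff (by positivity) ht.ne']
        ring
  have hz : P (f*(a+c)*(b*(a+c)+e*(b+d))/((b+d)*(a*(b+d)+f*(a+c)))) (e*(b+d)*(a*(b+d)+f*(a+c))/((a+c)*(b*(a+c)+e*(b+d)))) = (((a+c)*(b+d)*(b*(a+c)+e*(b+d))*(a*(b+d)+f*(a+c))))⁻¹ • P (f*(a+c)^2*(b*(a+c)+e*(b+d))^2) (e*(b+d)^2*(a*(b+d)+f*(a+c))^2) := by
    rw [smul_P, P_inj]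
    constructor <;>
      · rw [inv_mul_eq_div, div_eq_div_iff (by positivity) ht.ne']
        ring
  rw [hv, hz, Rme_smul _ _ _ (inv_ne_zero ht.ne'),
    Rme_lc _ _ _ _ (by positivity) (by positivity)]
  have hs1 : d*(a+c)^2*(b*(a+c)+e*(b+d))*(a*(b+d)+f*(a+c)) + f*(a+c)^2*(b*(a+c)+e*(b+d))^2 = (a+c)^2*(b+d)*(b*(a+c)+e*(b+d))*(a*(d+f)+f*(c+e)) := by ring
  have hs2 : c*(b+d)^2*(b*(a+c)+e*(b+d))*(a*(b+d)+f*(a+c)) + e*(b+d)^2*(a*(b+d)+f*(a+c))^2 = (b+d)^2*(a+c)*(a*(b+d)+f*(a+c))*(b*(c+e)+e*(d+f)) := by ring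
  rw [hs1, hs2]
  set A := (b*(a+c)+e*(b+d)) with hA'
  set B := (a*(b+d)+f*(a+c)) with hB'
  set C := (a*(d+f)+f*(c+e)) with hC'
  set D := (b*(c+e)+e*(d+f)) with hD'
  clear_value A B C D
  simp only [smul_P, Prod.mk.injEq, P_inj]
  refine ⟨⟨?_, ?_⟩, ?_, ?_⟩ <;>
    · rw [inv_mul_eq_div, div_div, div_eq_div_iff (by positivity) (by positivity)]
      ring

lemma L12r (a b c d e f : ℝ) (ha : 0 < a) (hb : 0 < b) (hc : 0 < c) (hd : 0 < d)
    (he : 0 < e) (hf : 0 < f) :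
    Rme (P (b*(c+e)*(a*(d+f)+f*(c+e))/((d+f)*(b*(c+e)+e*(d+f)))) (a*(d+f)*(b*(c+e)+e*(d+f))/((c+e)*(a*(d+f)+f*(c+e))))) (P (d*(c+e)/(d+f)) (c*(d+f)/(c+e)))
      = (P (a*(b*(a+c)+e*(b+d))/(a*(b+d)+f*(a+c))) (b*(a*(b+d)+f*(a+c))/(b*(a+c)+e*(b+d))), P (c*(b*(a+c)+e*(b+d))*(a*(d+f)+f*(c+e))/((a*(b+d)+f*(a+c))*(b*(c+e)+e*(d+f)))) (d*(a*(b+d)+f*(a+c))*(b*(c+e)+e*(d+f))/((b*(a+c)+e*(b+d))*(a*(d+f)+f*(c+e))))) := by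
  have hce : (0:ℝ) < c + e := by positivity
  have hdf : (0:ℝ) < d + f := by positivity
  have hA : (0:ℝ) < (b*(a+c)+e*(b+d)) := by positivity
  have hB : (0:ℝ) < (a*(b+d)+f*(a+c)) := by positivity
  have hC : (0:ℝ) < (a*(d+f)+f*(c+e)) := by positivity
  have hD : (0:ℝ) < (b*(c+e)+e*(d+f)) := by positivity
  have hE : (0:ℝ) < (b*(a*(d+f)+f*(c+e))+d*(b*(c+e)+e*(d+f))) := by positivity
  have hF : (0:ℝ) < (a*(b*(c+e)+e*(d+f))+c*(a*(d+f)+f*(c+e))) := by positivity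
  have ht : (0:ℝ) < ((c+e)*(d+f)*(a*(d+f)+f*(c+e))*(b*(c+e)+e*(d+f))) := by positivity
  have hv : P (b*(c+e)*(a*(d+f)+f*(c+e))/((d+f)*(b*(c+e)+e*(d+f)))) (a*(d+f)*(b*(c+e)+e*(d+f))/((c+e)*(a*(d+f)+f*(c+e)))) = (((c+e)*(d+f)*(a*(d+f)+f*(c+e))*(b*(c+e)+e*(d+f))))⁻¹ • P (b*(c+e)^2*(a*(d+f)+f*(c+e))^2) (a*(d+f)^2*(b*(c+e)+e*(d+f))^2) := by
    rw [smul_P, P_inj]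
    constructor <;>
      · rw [inv_mul_eq_div, div_eq_div_iff (by positivity) ht.ne']
        ring
  have hz : P (d*(c+e)/(d+f)) (c*(d+f)/(c+e)) = (((c+e)*(d+f)*(a*(d+f)+f*(c+e))*(b*(c+e)+e*(d+f))))⁻¹ • P (d*(c+e)^2*(a*(d+f)+f*(c+e))*(b*(c+e)+e*(d+f))) (c*(d+f)^2*(a*(d+f)+f*(c+e))*(b*(c+e)+e*(d+f))) := by
    rw [smul_P, P_inj]
    constructor <;>
      · rw [inv_mul_eq_div, div_eq_div_iff (by positivity) ht.ne']
        ring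
  rw [hv, hz, Rme_smul _ _ _ (inv_ne_zero ht.ne'),
    Rme_lc _ _ _ _ (by positivity) (by positivity)]
  have hs1 : b*(c+e)^2*(a*(d+f)+f*(c+e))^2 + d*(c+e)^2*(a*(d+f)+f*(c+e))*(b*(c+e)+e*(d+f)) = (c+e)^2*(a*(d+f)+f*(c+e))*(b*(a*(d+f)+f*(c+e))+d*(b*(c+e)+e*(d+f))) := by ring
  have hs2 : a*(d+f)^2*(b*(c+e)+e*(d+f))^2 + c*(d+f)^2*(a*(d+f)+f*(c+e))*(b*(c+e)+e*(d+f)) = (d+f)^2*(b*(c+e)+e*(d+f))*(a*(b*(c+e)+e*(d+f))+c*(a*(d+f)+f*(c+e))) := by ring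
  have key : (c+e)*(b*(a*(d+f)+f*(c+e))+d*(b*(c+e)+e*(d+f)))*(a*(b+d)+f*(a+c)) = (b*(a+c)+e*(b+d))*(d+f)*(a*(b*(c+e)+e*(d+f))+c*(a*(d+f)+f*(c+e))) := by ring
  rw [hs1, hs2]
  set A := (b*(a+c)+e*(b+d)) with hA'
  set B := (a*(b+d)+f*(a+c)) with hB'
  set C := (a*(d+f)+f*(c+e)) with hC'
  set D := (b*(c+e)+e*(d+f)) with hD'
  set E := (b*C+d*D) with hE'
  set F := (a*D+c*C) with hF'
  clear_value A B C D E F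
  simp only [smul_P, Prod.mk.injEq, P_inj]
  refine ⟨⟨?_, ?_⟩, ?_, ?_⟩
  · rw [inv_mul_eq_div, div_div, div_eq_div_iff (by positivity) (by positivity)]
    linear_combination (a*(c+e)*(d+f)^2*C*D^2) * key
  · rw [inv_mul_eq_div, div_div, div_eq_div_iff (by positivity) (by positivity)]
    linear_combination (-(b*(c+e)^2*(d+f)*C^2*D)) * key
  · rw [inv_mul_eq_div, div_div, div_eq_div_iff (by positivity) (by positivity)]
    linear_combination (c*(c+e)*(d+f)^2*C^2*D^2) * key
  · rw [inv_mul_eq_div, div_div, div_eq_div_iff (by positivity) (by positivity)]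
    linear_combination (-(d*(c+e)^2*(d+f)*C^2*D^2)) * key

lemma yb_lc (a b c d e f : ℝ) (ha : 0 < a) (hb : 0 < b) (hc : 0 < c) (hd : 0 < d)
    (he : 0 < e) (hf : 0 < f) :
    act23 Rme (act13 Rme (act12 Rme (P a b, P c d, P e f))) =
      act12 Rme (act13 Rme (act23 Rme (P a b, P c d, P e f))) := by
  have hac : (0:ℝ) < a + c := by positivity
  have hbd : (0:ℝ) < b + d := by positivity
  have hce : (0:ℝ) < c + e := by positivity
  have hdf : (0:ℝ) < d + f := by positivity
  have h12 := Rme_lc a b c d hac.ne' hbd.ne'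
  have h13 := L13 a b c d e f ha hb hc hd he hf
  have h23 := L23 a b c d e f ha hb hc hd he hf
  have h23r := Rme_lc c d e f hce.ne' hdf.ne'
  have h13r := L13r a b c d e f ha hb hc hd he hf
  have h12r := L12r a b c d e f ha hb hc hd he hf
  simp only [act12, act13, act23, h12, h13, h23, h23r, h13r, h12r]


/-- The momentum-energy map is a set-theoretical Yang–Baxter map on forward
timelike vectors. -/
theorem momentum_energy_yang_baxter
    (x y z : ℝ × ℝ)
    (hx : ForwardTimelike x) (hy : ForwardTimelike y) (hz : ForwardTimelike z) :
    act23 Rme (act13 Rme (act12 Rme (x, y, z))) =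
      act12 Rme (act13 Rme (act23 Rme (x, y, z))) := by
  obtain ⟨x1, x2⟩ := x
  obtain ⟨y1, y2⟩ := y
  obtain ⟨z1, z2⟩ := z
  obtain ⟨hx1, hx2⟩ := hx
  obtain ⟨hy1, hy2⟩ := hy
  obtain ⟨hz1, hz2⟩ := hz
  simp only [mink] at hx2 hy2 hz2
  have ex : ((x1, x2) : ℝ × ℝ) = P (x1+x2) (x1-x2) := by
    simp only [P, Prod.mk.injEq]; constructor <;> ring
  have ey : ((y1, y2) : ℝ × ℝ) = P (y1+y2) (y1-y2) := by
    simp only [P, Prod.mk.injEq]; constructor <;> ring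
  have ez : ((z1, z2) : ℝ × ℝ) = P (z1+z2) (z1-z2) := by
    simp only [P, Prod.mk.injEq]; constructor <;> ring
  rw [ex, ey, ez]
  exact yb_lc _ _ _ _ _ _ (by nlinarith) (by nlinarith) (by nlinarith) (by nlinarith)
    (by nlinarith) (by nlinarith)
end

section
/- The momentum-energy map R admits the Lax representation with Lax matrix L(x, ζ) = [[ζ, x₀ + x₁], [x₀ − x₁, ζ]]: for all x, y ∈ ℝ² with ⟨x+y, x+y⟩ ≠ 0, setting k = (⟨x,x⟩ − ⟨y,y⟩)/⟨x+y, x+y⟩, u = y + k(x+y), v = x − k(x+y), one has for every ζ ∈ ℂ the 2×2 matrix identity L(u, ζ) · L(v, ζ) = L(y, ζ) · L(x, ζ). -/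
open Matrix

/-- The Lax matrix `L(x, ζ) = [[ζ, x₀ + x₁], [x₀ − x₁, ζ]]` of the
momentum-energy map. -/
noncomputable def LaxME (x : ℝ × ℝ) (ζ : ℂ) : Matrix (Fin 2) (Fin 2) ℂ :=
  !![ζ, ((x.1 + x.2 : ℝ) : ℂ); ((x.1 - x.2 : ℝ) : ℂ), ζ]

/-!
In light-cone coordinates `a₊ = a₀ + a₁`, `a₋ = a₀ − a₁` the Lax matrix is `[[ζ, a₊], [a₋, ζ]]`,
so `L(a, ζ) L(b, ζ) = [[ζ² + a₊ b₋, ζ (a₊ + b₊)], [ζ (a₋ + b₋), ζ² + a₋ b₊]]`. The Lax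
identity thus amounts to conservation of `x + y` together with `u₊ v₋ = y₊ x₋` and
`u₋ v₊ = y₋ x₊`. Both products differ from the right-hand sides by
`k (⟨x,x⟩ − ⟨y,y⟩ − k ⟨x+y, x+y⟩)`, which vanishes by the choice of `k`.
-/

theorem LaxME_mul_LaxME_eq_of_lightCone {a b c d : ℝ × ℝ} (ζ : ℂ) (hsum : a + b = c + d)
    (hpm : (a.1 + a.2) * (b.1 - b.2) = (c.1 + c.2) * (d.1 - d.2))
    (hmp : (a.1 - a.2) * (b.1 + b.2) = (c.1 - c.2) * (d.1 + d.2)) :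
    LaxME a ζ * LaxME b ζ = LaxME c ζ * LaxME d ζ := by
  have hsum₁ : (a.1 + b.1 : ℂ) = c.1 + d.1 := by exact_mod_cast congrArg Prod.fst hsum
  have hsum₂ : (a.2 + b.2 : ℂ) = c.2 + d.2 := by exact_mod_cast congrArg Prod.snd hsum
  have hpm' : ((a.1 + a.2) * (b.1 - b.2) : ℂ) = (c.1 + c.2) * (d.1 - d.2) := by exact_mod_cast hpm
  have hmp' : ((a.1 - a.2) * (b.1 + b.2) : ℂ) = (c.1 - c.2) * (d.1 + d.2) := by exact_mod_cast hmp
  simp only [LaxME, mul_fin_two]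
  ext i j
  fin_cases i <;> fin_cases j <;>
    simp only [of_apply, cons_val', cons_val_zero, cons_val_one, cons_val_fin_one, Fin.zero_eta,
      Fin.mk_one] <;>
    push_cast
  · linear_combination hpm'
  · linear_combination ζ * (hsum₁ + hsum₂)
  · linear_combination ζ * (hsum₁ - hsum₂)
  · linear_combination hmp'

theorem collision_plus_mul_minus (x y : ℝ × ℝ) (k : ℝ) :
    ((y + k • (x + y)).1 + (y + k • (x + y)).2) * ((x - k • (x + y)).1 - (x - k • (x + y)).2)
      = (y.1 + y.2) * (x.1 - x.2) + k * (mink x x - mink y y - k * mink (x + y) (x + y)) := by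
  simp only [mink, Prod.fst_add, Prod.snd_add, Prod.fst_sub, Prod.snd_sub, Prod.smul_fst,
    Prod.smul_snd, smul_eq_mul]
  ring

theorem collision_minus_mul_plus (x y : ℝ × ℝ) (k : ℝ) :
    ((y + k • (x + y)).1 - (y + k • (x + y)).2) * ((x - k • (x + y)).1 + (x - k • (x + y)).2)
      = (y.1 - y.2) * (x.1 + x.2) + k * (mink x x - mink y y - k * mink (x + y) (x + y)) := by
  simp only [mink, Prod.fst_add, Prod.snd_add, Prod.fst_sub, Prod.snd_sub, Prod.smul_fst,
    Prod.smul_snd, smul_eq_mul]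
  ring

/-- The momentum-energy map admits the Lax representation with Lax matrix
`L(x, ζ)`. -/
theorem momentum_energy_lax
    (x y : ℝ × ℝ) (h : mink (x + y) (x + y) ≠ 0)
    (k : ℝ) (hk : k = (mink x x - mink y y) / mink (x + y) (x + y))
    (u v : ℝ × ℝ)
    (hu : u = y + k • (x + y))
    (hv : v = x - k • (x + y))
    (ζ : ℂ) :
    LaxME u ζ * LaxME v ζ = LaxME y ζ * LaxME x ζ := by
  have hdefect : mink x x - mink y y - k * mink (x + y) (x + y) = 0 := by
    rw [hk, div_mul_cancel₀ _ h, sub_self]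
  subst hu hv
  apply LaxME_mul_LaxME_eq_of_lightCone ζ
  · abel
  · rw [collision_plus_mul_minus, hdefect, mul_zero, add_zero]
  · rw [collision_minus_mul_plus, hdefect, mul_zero, add_zero]
end

section
/- The momentum-energy map R is quadrirational, with the explicit companion inversions: let x, y ∈ ℝ² with ⟨x+y, x+y⟩ ≠ 0 and ⟨x,x⟩ ≠ ⟨y,y⟩, and let u = y + k(x,y)(x+y), v = x − k(x,y)(x+y) where k(x,y) = (⟨x,x⟩ − ⟨y,y⟩)/⟨x+y, x+y⟩. Then ⟨x−v, x−v⟩ ≠ 0 and ⟨u−y, u−y⟩ ≠ 0, and one has u = −v + k(x, −v)(x − v), y = −x + k(x, −v)(x − v), as well as v = −u + k(u, −y)(u − y), x = −y + k(u, −y)(u − y). In particular, for fixed y the map x ↦ u and for fixed x the map y ↦ v are birational. -/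
lemma mink_neg_neg (a b : ℝ × ℝ) : mink (-a) (-b) = mink a b := by
  simp only [mink, Prod.fst_neg, Prod.snd_neg]; ring

lemma mink_smul_smul (c : ℝ) (a b : ℝ × ℝ) : mink (c • a) (c • b) = c ^ 2 * mink a b := by
  simp only [mink, Prod.smul_fst, Prod.smul_snd, smul_eq_mul]; ring

lemma kcol_mul_mink {x y : ℝ × ℝ} (h : mink (x + y) (x + y) ≠ 0) :
    kcol x y * mink (x + y) (x + y) = mink x x - mink y y :=
  div_mul_cancel₀ _ h

section

variable {x y : ℝ × ℝ} {c : ℝ} (hc : c * mink (x + y) (x + y) = mink x x - mink y y)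
include hc

lemma mink_self_sub_mink_sub_smul :
    mink x x - mink (x - c • (x + y)) (x - c • (x + y)) = c * mink (x + y) (x + y) := by
  simp only [mink, Prod.fst_add, Prod.snd_add, Prod.fst_sub, Prod.snd_sub, Prod.smul_fst,
    Prod.smul_snd, smul_eq_mul] at hc ⊢
  linear_combination (-c) * hc

lemma mink_add_smul_sub_mink_self :
    mink (y + c • (x + y)) (y + c • (x + y)) - mink y y = c * mink (x + y) (x + y) := by
  simp only [mink, Prod.fst_add, Prod.snd_add, Prod.smul_fst, Prod.smul_snd, smul_eq_mul] at hc ⊢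
  linear_combination c * hc

end

lemma kcol_eq_inv {p q s : ℝ × ℝ} {c : ℝ} (hc : c ≠ 0) (hs : mink s s ≠ 0)
    (hadd : p + q = c • s) (hdiff : mink p p - mink q q = c * mink s s) :
    kcol p q = c⁻¹ := by
  rw [kcol, hadd, mink_smul_smul, hdiff]
  field_simp

/-- The momentum-energy map is quadrirational: the explicit companion
inversions recover `(u, y)` from `(x, v)` and `(v, x)` from `(u, y)`. -/
theorem momentum_energy_quadrirational
    (x y : ℝ × ℝ)
    (h : mink (x + y) (x + y) ≠ 0)
    (hm : mink x x ≠ mink y y)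
    (u v : ℝ × ℝ)
    (hu : u = y + kcol x y • (x + y))
    (hv : v = x - kcol x y • (x + y)) :
    mink (x - v) (x - v) ≠ 0 ∧
    mink (u - y) (u - y) ≠ 0 ∧
    u = -v + kcol x (-v) • (x - v) ∧
    y = -x + kcol x (-v) • (x - v) ∧
    v = -u + kcol u (-y) • (u - y) ∧
    x = -y + kcol u (-y) • (u - y) := by
  set k := kcol x y
  have hk : k ≠ 0 := div_ne_zero (sub_ne_zero.mpr hm) h
  have hkM := kcol_mul_mink h
  have hxv : x + -v = k • (x + y) := by rw [hv]; abel
  have huy : u + -y = k • (x + y) := by rw [hu]; abel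
  have hkv : kcol x (-v) = k⁻¹ :=
    kcol_eq_inv hk h hxv (by rw [mink_neg_neg, hv]; exact mink_self_sub_mink_sub_smul hkM)
  have hku : kcol u (-y) = k⁻¹ :=
    kcol_eq_inv hk h huy (by rw [mink_neg_neg, hu]; exact mink_add_smul_sub_mink_self hkM)
  have hkx : mink (k • (x + y)) (k • (x + y)) ≠ 0 := by
    rw [mink_smul_smul]; exact mul_ne_zero (pow_ne_zero 2 hk) h
  rw [← sub_eq_add_neg] at hxv huy
  have hxv_rescaled : kcol x (-v) • (x - v) = x + y := by rw [hkv, hxv, inv_smul_smul₀ hk]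
  have huy_rescaled : kcol u (-y) • (u - y) = x + y := by rw [hku, huy, inv_smul_smul₀ hk]
  refine ⟨hxv ▸ hkx, huy ▸ hkx, ?_, ?_, ?_, ?_⟩ <;>
    simp only [hxv_rescaled, huy_rescaled] <;> (subst hu hv; abel)
end

section
/- The monodromy matrix of the periodic transfer map of the momentum-energy map satisfies the intertwining (conjugation) relation: let n ≥ 1 and let x₁, …, xₙ, y₁, …, yₙ ∈ ℝ² satisfy ⟨xᵢ + yᵢ, xᵢ + yᵢ⟩ ≠ 0 for all i, and set (uᵢ, vᵢ) = R(xᵢ, yᵢ). Define the monodromy matrix Mₙ(x₁,…,xₙ,y₁,…,yₙ)(ζ) = L(yₙ,ζ)L(xₙ,ζ)⋯L(y₁,ζ)L(x₁,ζ) and the transfer map Tₙ(x₁,…,xₙ,y₁,…,yₙ) = (u₁,…,uₙ, v₂,…,vₙ, v₁). Then for every ζ ∈ ℂ, L(v₁,ζ) · Mₙ(x₁,…,xₙ,y₁,…,yₙ)(ζ) = Mₙ(Tₙ(x₁,…,xₙ,y₁,…,yₙ))(ζ) · L(v₁,ζ). In particular, whenever L(v₁,ζ) is invertible, the monodromy matrix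 after applying Tₙ is conjugate to the original one, so its trace is preserved: tr Mₙ(Tₙ(…))(ζ) = tr Mₙ(…)(ζ) for all ζ ∈ ℂ. -/
open Matrix

/-- The monodromy matrix
`Mₙ(x₁,…,xₙ,y₁,…,yₙ)(ζ) = L(yₙ,ζ)L(xₙ,ζ)⋯L(y₁,ζ)L(x₁,ζ)`
(with `x₁ = x 0`, …, `xₙ = x (n-1)`). -/
noncomputable def monodromy {n : ℕ} (x y : Fin n → ℝ × ℝ) (ζ : ℂ) :
    Matrix (Fin 2) (Fin 2) ℂ :=
  ((List.ofFn fun i : Fin n => LaxME (y i) ζ * LaxME (x i) ζ).reverse).prod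

section Aux

set_option linter.unreachableTactic false
set_option linter.unusedTactic false

/-- Collision relation for the Lax matrix: `L(u,ζ)L(v,ζ) = L(y,ζ)L(x,ζ)`. -/
lemma lax_swap (x y : ℝ × ℝ) (h : mink (x + y) (x + y) ≠ 0) (ζ : ℂ) :
    LaxME (y + kcol x y • (x + y)) ζ * LaxME (x - kcol x y • (x + y)) ζ =
      LaxME y ζ * LaxME x ζ := by
  have h' : (x.1 + y.1) * (x.1 + y.1) - (x.2 + y.2) * (x.2 + y.2) ≠ 0 := by
    simpa [mink] using h
  set k : ℝ := kcol x y with hk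
  have hkdef : k = ((x.1 * x.1 - x.2 * x.2) - (y.1 * y.1 - y.2 * y.2)) /
      ((x.1 + y.1) * (x.1 + y.1) - (x.2 + y.2) * (x.2 + y.2)) := by
    simp [hk, kcol, mink]
  have hkD : k * ((x.1 + y.1) * (x.1 + y.1) - (x.2 + y.2) * (x.2 + y.2)) =
      (x.1 * x.1 - x.2 * x.2) - (y.1 * y.1 - y.2 * y.2) := by
    rw [hkdef]; exact div_mul_cancel₀ _ h'
  have e1 : (y.1 + k * (x.1 + y.1) + (y.2 + k * (x.2 + y.2))) *
      (x.1 - k * (x.1 + y.1) - (x.2 - k * (x.2 + y.2))) = (y.1 + y.2) * (x.1 - x.2) := by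
    linear_combination (-k) * hkD
  have e2 : (y.1 + k * (x.1 + y.1) - (y.2 + k * (x.2 + y.2))) *
      (x.1 - k * (x.1 + y.1) + (x.2 - k * (x.2 + y.2))) = (y.1 - y.2) * (x.1 + x.2) := by
    linear_combination (-k) * hkD
  have e3 : (x.1 - k * (x.1 + y.1) + (x.2 - k * (x.2 + y.2))) +
      (y.1 + k * (x.1 + y.1) + (y.2 + k * (x.2 + y.2))) = (x.1 + x.2) + (y.1 + y.2) := by ring
  have e4 : (y.1 + k * (x.1 + y.1) - (y.2 + k * (x.2 + y.2))) +
      (x.1 - k * (x.1 + y.1) - (x.2 - k * (x.2 + y.2))) = (y.1 - y.2) + (x.1 - x.2) := by ring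
  have c1 := congrArg (Complex.ofReal) e1
  have c2 := congrArg (Complex.ofReal) e2
  have c3 := congrArg (Complex.ofReal) e3
  have c4 := congrArg (Complex.ofReal) e4
  push_cast at c1 c2 c3 c4
  ext i j
  fin_cases i <;> fin_cases j <;>
    · simp [LaxME, Matrix.mul_apply, Fin.sum_univ_two,
        Prod.fst_add, Prod.snd_add, Prod.fst_sub, Prod.snd_sub, Prod.smul_fst, Prod.smul_snd,
        smul_eq_mul, -Complex.ofReal_sub, -Complex.ofReal_add, -Complex.ofReal_mul]
      push_cast
      first
      | linear_combination c1
      | linear_combination ζ * c3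
      | linear_combination ζ * c4
      | linear_combination c2

/-- Cyclic-shift identity for reversed products in a monoid. -/
lemma shift_aux {M : Type*} [Monoid M] (A B : ℕ → M) :
    ∀ k, B k * ((List.ofFn fun i : Fin k => A i * B i).reverse).prod
      = ((List.ofFn fun i : Fin k => B (i + 1) * A i).reverse).prod * B 0
  | 0 => by simp
  | (k + 1) => by
    have ih := shift_aux A B k
    rw [List.ofFn_succ' (fun i : Fin (k+1) => A i * B i),
        List.ofFn_succ' (fun i : Fin (k+1) => B (i+1) * A i)]
    simp only [List.concat_eq_append, List.reverse_append, List.reverse_cons,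
      List.reverse_nil, List.nil_append, List.cons_append, List.prod_cons,
      Fin.val_last, Fin.coe_castSucc]
    rw [← mul_assoc, ← mul_assoc, mul_assoc (B (k+1) * A k), ih, ← mul_assoc]

/-- Polynomial version of the Lax matrix. -/
noncomputable def LaxP (x : ℝ × ℝ) : Matrix (Fin 2) (Fin 2) (Polynomial ℂ) :=
  !![Polynomial.X, Polynomial.C ((x.1 + x.2 : ℝ) : ℂ);
     Polynomial.C ((x.1 - x.2 : ℝ) : ℂ), Polynomial.X]

/-- Polynomial version of the monodromy matrix. -/
noncomputable def monoP {n : ℕ} (x y : Fin n → ℝ × ℝ) :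
    Matrix (Fin 2) (Fin 2) (Polynomial ℂ) :=
  ((List.ofFn fun i : Fin n => LaxP (y i) * LaxP (x i)).reverse).prod

lemma LaxP_eval (x : ℝ × ℝ) (ζ : ℂ) :
    (Polynomial.evalRingHom ζ).mapMatrix (LaxP x) = LaxME x ζ := by
  ext i j
  fin_cases i <;> fin_cases j <;> simp [LaxP, LaxME]

lemma monoP_eval {n : ℕ} (x y : Fin n → ℝ × ℝ) (ζ : ℂ) :
    (Polynomial.evalRingHom ζ).mapMatrix (monoP x y) = monodromy x y ζ := by
  rw [monoP, monodromy, map_list_prod, List.map_reverse]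
  congr 1
  rw [List.map_ofFn]
  congr 1
  exact congrArg List.ofFn (funext fun i => by
    simp only [Function.comp_apply, _root_.map_mul, LaxP_eval])

lemma trace_eval {n : ℕ} (x y : Fin n → ℝ × ℝ) (ζ : ℂ) :
    (monodromy x y ζ).trace = Polynomial.eval ζ (monoP x y).trace := by
  rw [← monoP_eval x y ζ]
  simp [Matrix.trace, Matrix.diag, RingHom.mapMatrix_apply, Matrix.map_apply]

end Aux

/-- The monodromy matrix of the periodic transfer map
`Tₙ(x₁,…,xₙ,y₁,…,yₙ) = (u₁,…,uₙ,v₂,…,vₙ,v₁)` of the momentum-energy map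
satisfies the intertwining relation
`L(v₁,ζ)·Mₙ(x,y)(ζ) = Mₙ(Tₙ(x,y))(ζ)·L(v₁,ζ)`; in particular the trace of the
monodromy matrix is preserved. -/
theorem transfer_monodromy_intertwining
    (n : ℕ) [NeZero n]
    (x y : Fin n → ℝ × ℝ)
    (h : ∀ i, mink (x i + y i) (x i + y i) ≠ 0)
    (u v : Fin n → ℝ × ℝ)
    (hu : ∀ i, u i = y i + kcol (x i) (y i) • (x i + y i))
    (hv : ∀ i, v i = x i - kcol (x i) (y i) • (x i + y i)) :
    (∀ ζ : ℂ, LaxME (v 0) ζ * monodromy x y ζ =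
      monodromy u (fun i => v (i + 1)) ζ * LaxME (v 0) ζ) ∧
    (∀ ζ : ℂ, (monodromy u (fun i => v (i + 1)) ζ).trace =
      (monodromy x y ζ).trace) := by
  have hswap : ∀ (i : Fin n) (ζ : ℂ),
      LaxME (u i) ζ * LaxME (v i) ζ = LaxME (y i) ζ * LaxME (x i) ζ := by
    intro i ζ
    rw [hu i, hv i]
    exact lax_swap (x i) (y i) (h i) ζ
  open Fin.NatCast in
  have part1 : ∀ ζ : ℂ, LaxME (v 0) ζ * monodromy x y ζ =
      monodromy u (fun i => v (i + 1)) ζ * LaxME (v 0) ζ := by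
    intro ζ
    have key := shift_aux (fun m : ℕ => LaxME (u (m : Fin n)) ζ)
      (fun m : ℕ => LaxME (v (m : Fin n)) ζ) n
    have hB0 : LaxME (v ((0 : ℕ) : Fin n)) ζ = LaxME (v 0) ζ := by norm_num
    have hBn : LaxME (v ((n : ℕ) : Fin n)) ζ = LaxME (v 0) ζ := by
      rw [Fin.natCast_self]
    have hm1 : monodromy x y ζ =
        ((List.ofFn fun i : Fin n =>
          LaxME (u ((i : ℕ) : Fin n)) ζ * LaxME (v ((i : ℕ) : Fin n)) ζ).reverse).prod := by
      rw [monodromy]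
      congr 2
      exact congrArg List.ofFn (funext fun i => by rw [Fin.cast_val_eq_self, hswap])
    have hm2 : monodromy u (fun i => v (i + 1)) ζ =
        ((List.ofFn fun i : Fin n =>
          LaxME (v (((i : ℕ) + 1 : ℕ) : Fin n)) ζ * LaxME (u ((i : ℕ) : Fin n)) ζ).reverse).prod := by
      rw [monodromy]
      congr 2
      exact congrArg List.ofFn (funext fun i => by push_cast; rfl)
    rw [hm1, hm2]
    simpa only [hBn, hB0] using key
  refine ⟨part1, ?_⟩
  -- trace preservation via a polynomial identity in ζ
  set v' : Fin n → ℝ × ℝ := fun i => v (i + 1) with hv'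
  set p : Polynomial ℂ := (monoP u v').trace - (monoP x y).trace with hp
  set c : ℂ := (((v 0).1 + (v 0).2 : ℝ) : ℂ) * (((v 0).1 - (v 0).2 : ℝ) : ℂ) with hc
  have hdetL : ∀ ζ : ℂ, (LaxME (v 0) ζ).det = ζ * ζ - c := by
    intro ζ
    simp [LaxME, Matrix.det_fin_two_of, hc]
  have hroot : ∀ ζ : ℂ, ζ * ζ - c ≠ 0 → p.IsRoot ζ := by
    intro ζ hζ
    have hdet : IsUnit (LaxME (v 0) ζ).det := by
      rw [hdetL]; exact isUnit_iff_ne_zero.mpr hζ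
    set L : Matrix (Fin 2) (Fin 2) ℂ := LaxME (v 0) ζ with hL
    set M : Matrix (Fin 2) (Fin 2) ℂ := monodromy x y ζ with hM
    set M' : Matrix (Fin 2) (Fin 2) ℂ := monodromy u v' ζ with hM'
    have htr : M'.trace = M.trace := by
      calc M'.trace = (M' * (L * L⁻¹)).trace := by
            rw [Matrix.mul_nonsing_inv _ hdet, mul_one]
        _ = ((M' * L) * L⁻¹).trace := by rw [mul_assoc]
        _ = (L⁻¹ * (M' * L)).trace := Matrix.trace_mul_comm _ _
        _ = (L⁻¹ * (L * M)).trace := by rw [← part1 ζ]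
        _ = ((L⁻¹ * L) * M).trace := by rw [mul_assoc]
        _ = M.trace := by rw [Matrix.nonsing_inv_mul _ hdet, one_mul]
    have := htr
    rw [hM, hM', trace_eval, trace_eval] at this
    simp only [Polynomial.IsRoot, hp, Polynomial.eval_sub, this, sub_self]
  have hq : (Polynomial.X ^ 2 - Polynomial.C c : Polynomial ℂ) ≠ 0 :=
    Polynomial.X_pow_sub_C_ne_zero (by norm_num) c
  have hfin : {ζ : ℂ | (Polynomial.X ^ 2 - Polynomial.C c : Polynomial ℂ).IsRoot ζ}.Finite :=
    Polynomial.finite_setOf_isRoot hq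
  have hsub : {ζ : ℂ | (Polynomial.X ^ 2 - Polynomial.C c : Polynomial ℂ).IsRoot ζ}ᶜ ⊆
      {ζ : ℂ | p.IsRoot ζ} := by
    intro ζ hζ
    apply hroot
    intro hcontra
    apply hζ
    simp only [Set.mem_setOf_eq, Polynomial.IsRoot, Polynomial.eval_sub, Polynomial.eval_pow,
      Polynomial.eval_X, Polynomial.eval_C]
    rw [sq]
    exact hcontra
  have hinf : {ζ : ℂ | p.IsRoot ζ}.Infinite :=
    Set.Infinite.mono hsub (Set.Finite.infinite_compl hfin)
  have hp0 : p = 0 := Polynomial.eq_zero_of_infinite_isRoot p hinf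
  intro ζ
  have : Polynomial.eval ζ p = 0 := by rw [hp0]; simp
  rw [hp, Polynomial.eval_sub, sub_eq_zero] at this
  rw [trace_eval, trace_eval]
  exact this
end

section
/- The 2×2 matrix refactorization underlying the planar collision map: let X, Y be 2×2 complex matrices such that W := Y + X − tr(X)·I is invertible, and define U := (YX − det(X)·I)·W⁻¹ and V := Y + X − U. Then U + V = X + Y and U·V = Y·X (equivalently, (U − ζI)(V − ζI) = (Y − ζI)(X − ζI) for all ζ ∈ ℂ), and moreover det(U) = det(X), tr(U) = tr(X), det(V) = det(Y), and tr(V) = tr(Y). -/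
/-!
By Cayley–Hamilton, `X * X = tr X • X - det X • 1`, so `W * X = Y * X - det X • 1` and hence
`U * W = W * X`. Since `W` differs from `X + Y` by a scalar, it commutes with `X + Y`, which gives
`V * W = W * Y`. Thus `U = W X W⁻¹` and `V = W Y W⁻¹` are conjugates of `X` and `Y`, so traces and
determinants are preserved; Cayley–Hamilton once more gives `W * (X * Y) = Y * X * W`, i.e. `U * V = Y * X`.
-/

open Matrix

namespace Matrix

section FinTwo

variable {R : Type*} [CommRing R] (X Y : Matrix (Fin 2) (Fin 2) R)

theorem mul_self_fin_two : X * X = X.trace • X - X.det • 1 := by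
  ext i j
  fin_cases i <;> fin_cases j <;>
    simp [mul_apply, Fin.sum_univ_two, det_fin_two, trace_fin_two] <;> ring

theorem add_sub_trace_smul_one_mul_right : (Y + X - X.trace • 1) * X = Y * X - X.det • 1 := by
  rw [sub_mul, add_mul, mul_self_fin_two, smul_mul_assoc, one_mul]
  abel

theorem add_sub_trace_smul_one_mul_mul :
    (Y + X - X.trace • 1) * (X * Y) = Y * X * (Y + X - X.trace • 1) := by
  calc (Y + X - X.trace • 1) * (X * Y)
      = Y * X * Y - X.det • Y := by
        rw [← mul_assoc, add_sub_trace_smul_one_mul_right, sub_mul, smul_mul_assoc, one_mul]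
    _ = Y * X * (Y + X - X.trace • 1) := by
        rw [mul_sub, mul_add, mul_assoc Y X X, mul_self_fin_two, mul_smul_comm, mul_one,
          mul_sub, mul_smul_comm, mul_smul_comm, mul_one]
        abel

end FinTwo

theorem eq_mul_mul_inv_of_mul_eq {n R : Type*} [Fintype n] [DecidableEq n] [CommRing R]
    {A B W : Matrix n n R} (hW : IsUnit W) (h : A * W = W * B) : A = W * B * W⁻¹ := by
  rw [← h, mul_nonsing_inv_cancel_right _ _ ((isUnit_iff_isUnit_det W).mp hW)]

end Matrix

theorem sub_smul_one_mul_sub_smul_one_eq {R A : Type*} [CommRing R] [Ring A] [Algebra R A]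
    {a b c d : A} (h_add : a + b = c + d) (h_mul : a * b = c * d) (ζ : R) :
    (a - ζ • 1) * (b - ζ • 1) = (c - ζ • 1) * (d - ζ • 1) := by
  have expand : ∀ x y : A, (x - ζ • 1) * (y - ζ • 1) = x * y - ζ • (x + y) + (ζ * ζ) • 1 := by
    intro x y
    simp only [sub_mul, mul_sub, smul_mul_assoc, mul_smul_comm, one_mul, mul_one, smul_sub,
      smul_add, smul_smul]
    abel
  rw [expand, expand, h_add, h_mul]

/-- The 2×2 matrix refactorization underlying the planar collision map:
if `W = Y + X − tr(X)·I` is invertible, `U = (YX − det(X)·I)·W⁻¹` and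
`V = Y + X − U`, then `U + V = X + Y`, `U·V = Y·X` (equivalently
`(U − ζI)(V − ζI) = (Y − ζI)(X − ζI)` for all `ζ`), and `U`, `V` have the same
determinant and trace as `X`, `Y` respectively. -/
theorem matrix_refactorization
    (X Y : Matrix (Fin 2) (Fin 2) ℂ)
    (W : Matrix (Fin 2) (Fin 2) ℂ)
    (hW : W = Y + X - (Matrix.trace X) • (1 : Matrix (Fin 2) (Fin 2) ℂ))
    (hWinv : IsUnit W)
    (U V : Matrix (Fin 2) (Fin 2) ℂ)
    (hU : U = (Y * X - (Matrix.det X) • (1 : Matrix (Fin 2) (Fin 2) ℂ)) * W⁻¹)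
    (hV : V = Y + X - U) :
    U + V = X + Y ∧
    U * V = Y * X ∧
    (∀ ζ : ℂ, (U - ζ • (1 : Matrix (Fin 2) (Fin 2) ℂ)) *
        (V - ζ • (1 : Matrix (Fin 2) (Fin 2) ℂ)) =
      (Y - ζ • (1 : Matrix (Fin 2) (Fin 2) ℂ)) *
        (X - ζ • (1 : Matrix (Fin 2) (Fin 2) ℂ))) ∧
    U.det = X.det ∧
    U.trace = X.trace ∧
    V.det = Y.det ∧
    V.trace = Y.trace := by
  have hUW : U * W = W * X := by
    rw [hU, nonsing_inv_mul_cancel_right _ _ ((isUnit_iff_isUnit_det W).mp hWinv), hW,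
      add_sub_trace_smul_one_mul_right]
  have hW_comm : Commute (Y + X) W :=
    hW ▸ (Commute.refl _).sub_right ((Commute.one_right _).smul_right _)
  have hVW : V * W = W * Y := by
    rw [hV, sub_mul, hUW, hW_comm.eq, ← mul_sub, add_sub_cancel_right]
  have h_add : U + V = X + Y := by rw [hV, add_sub_cancel, add_comm]
  have h_mul : U * V = Y * X := by
    rw [← hWinv.mul_left_inj, mul_assoc, hVW, ← mul_assoc, hUW, mul_assoc, hW,
      add_sub_trace_smul_one_mul_mul]
  obtain rfl := eq_mul_mul_inv_of_mul_eq hWinv hUW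
  obtain rfl := eq_mul_mul_inv_of_mul_eq hWinv hVW
  refine ⟨h_add, h_mul, fun ζ => ?_, det_conj hWinv X, trace_conj hWinv X,
    det_conj hWinv Y, trace_conj hWinv Y⟩
  exact sub_smul_one_mul_sub_smul_one_eq (h_add.trans (add_comm X Y)) h_mul ζ
end
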